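/- Let U ⊆ ℝ² be open and Φ : U → S³ ⊂ ℝ⁴ a smooth conformal immersion into S³ with conformal factor e^λ, mean curvature H and trace-free Weingarten coefficient I⁰₁₁, satisfying H = e^{−4λ} I⁰₁₁ on U. Then Φ satisfies the ℝ⁴-valued divergence-form equation ∂_{x₁}((1 − e^{−2λ}) ∂_{x₁}Φ) + ∂_{x₂}((1 + e^{−2λ}) ∂_{x₂}Φ) + 2 e^{2λ} Φ = 0 on U. -/

import Mathlib

noncomputable section

open Real MeasureTheory
open scoped ENNReal RealInnerProductSpace

/-- The plane `ℝ²`. -/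
abbrev RR2 := ℝ × ℝ
/-- Euclidean `ℝ⁴`. -/
abbrev RR4 := EuclideanSpace ℝ (Fin 4)

/-- Partial derivative in the `x₁` direction of an `ℝ⁴`-valued map on `ℝ²`. -/
def d1 (f : RR2 → RR4) (x : RR2) : RR4 := fderiv ℝ f x (1, 0)
/-- Partial derivative in the `x₂` direction of an `ℝ⁴`-valued map on `ℝ²`. -/
def d2 (f : RR2 → RR4) (x : RR2) : RR4 := fderiv ℝ f x (0, 1)
/-- Partial derivative in the `x₁` direction of a scalar map on `ℝ²`. -/
def d1s (f : RR2 → ℝ) (x : RR2) : ℝ := fderiv ℝ f x (1, 0)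
/-- Partial derivative in the `x₂` direction of a scalar map on `ℝ²`. -/
def d2s (f : RR2 → ℝ) (x : RR2) : ℝ := fderiv ℝ f x (0, 1)

/-- Determinant of four vectors of `ℝ⁴`. -/
def det4 (a b c d : RR4) : ℝ :=
  Matrix.det (Matrix.of ![(fun i => a i), (fun i => b i), (fun i => c i), (fun i => d i)])

/-- `Φ : U → S³ ⊂ ℝ⁴` is a smooth conformal immersion into `S³` with conformal factor
`e^lam` and (positively oriented) Gauss map `n`. -/
structure IsConformalImmersionS3 (U : Set RR2) (Φ : RR2 → RR4) (lam : RR2 → ℝ)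
    (n : RR2 → RR4) : Prop where
  smooth_Phi : ContDiffOn ℝ (⊤ : ℕ∞) Φ U
  smooth_lam : ContDiffOn ℝ (⊤ : ℕ∞) lam U
  smooth_n : ContDiffOn ℝ (⊤ : ℕ∞) n U
  mem_sphere : ∀ x ∈ U, ‖Φ x‖ = 1
  conf_orth : ∀ x ∈ U, ⟪d1 Φ x, d2 Φ x⟫ = 0
  conf_norm1 : ∀ x ∈ U, ‖d1 Φ x‖ = exp (lam x)
  conf_norm2 : ∀ x ∈ U, ‖d2 Φ x‖ = exp (lam x)
  n_norm : ∀ x ∈ U, ‖n x‖ = 1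
  n_orth_Phi : ∀ x ∈ U, ⟪n x, Φ x⟫ = 0
  n_orth_d1 : ∀ x ∈ U, ⟪n x, d1 Φ x⟫ = 0
  n_orth_d2 : ∀ x ∈ U, ⟪n x, d2 Φ x⟫ = 0
  oriented : ∀ x ∈ U, 0 < det4 (Φ x) (d1 Φ x) (d2 Φ x) (n x)

/-- Second fundamental form coefficient `I₁₁ = n·∂²_{x₁x₁}Φ`. -/
def I11 (Φ n : RR2 → RR4) (x : RR2) : ℝ := ⟪n x, d1 (d1 Φ) x⟫
/-- Second fundamental form coefficient `I₁₂ = n·∂²_{x₁x₂}Φ`. -/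
def I12 (Φ n : RR2 → RR4) (x : RR2) : ℝ := ⟪n x, d2 (d1 Φ) x⟫
/-- Second fundamental form coefficient `I₂₂ = n·∂²_{x₂x₂}Φ`. -/
def I22 (Φ n : RR2 → RR4) (x : RR2) : ℝ := ⟪n x, d2 (d2 Φ) x⟫

/-- Mean curvature `H = (1/2) e^{-2λ} (I₁₁ + I₂₂)`. -/
def meanCurv (Φ : RR2 → RR4) (lam : RR2 → ℝ) (n : RR2 → RR4) (x : RR2) : ℝ :=
  (1 / 2) * exp (-(2 * lam x)) * (I11 Φ n x + I22 Φ n x)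

/-- Trace-free Weingarten coefficient `I⁰₁₁ = (I₁₁ - I₂₂)/2`. -/
def I011 (Φ n : RR2 → RR4) (x : RR2) : ℝ := (I11 Φ n x - I22 Φ n x) / 2
/-- Trace-free Weingarten coefficient `I⁰₁₂ = I₁₂`. -/
def I012 (Φ n : RR2 → RR4) (x : RR2) : ℝ := I12 Φ n x

/-! Differentiating the relations `|Φ|² = 1`, `⟪Φ₁, Φ₂⟫ = 0` and `|Φ₁|² = |Φ₂|² = e^{2λ}`
determines the inner products of the second derivatives `Φᵢⱼ` with `Φ`, `Φ₁` and `Φ₂`.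
Testing against the basis `(Φ, Φ₁, Φ₂, n)` then shows that for every conformal immersion the
left-hand side equals `2 e^{2λ} (H - e^{-4λ} I⁰₁₁) n`, which vanishes under the constraint. -/

open Filter Topology

section Calculus

variable {E F : Type*} [NormedAddCommGroup E] [NormedSpace ℝ E]
  [NormedAddCommGroup F] [InnerProductSpace ℝ F]

theorem inner_fderiv_add_inner_fderiv_of_eventuallyEq {f g : E → F} {c : E → ℝ} {x : E}
    (hf : DifferentiableAt ℝ f x) (hg : DifferentiableAt ℝ g x)
    (hfg : (fun y => ⟪f y, g y⟫) =ᶠ[𝓝 x] c) (v : E) :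
    ⟪fderiv ℝ f x v, g x⟫ + ⟪f x, fderiv ℝ g x v⟫ = fderiv ℝ c x v := by
  rw [← hfg.fderiv_eq, fderiv_inner_apply ℝ hf hg, add_comm]

theorem fderiv_exp_const_mul_apply {g : E → ℝ} {x : E} (hg : DifferentiableAt ℝ g x) (a : ℝ)
    (v : E) : fderiv ℝ (fun y => exp (a * g y)) x v = a * fderiv ℝ g x v * exp (a * g x) := by
  rw [fderiv_exp (hg.const_mul a), fderiv_const_mul hg]
  simp only [smul_apply, smul_eq_mul]
  ring

end Calculus

theorem ContDiffOn.d1 {U : Set RR2} {f : RR2 → RR4} (hf : ContDiffOn ℝ (⊤ : ℕ∞) f U)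
    (hU : IsOpen U) : ContDiffOn ℝ (⊤ : ℕ∞) (d1 f) U :=
  (hf.fderiv_of_isOpen hU le_rfl).clm_apply contDiffOn_const

theorem ContDiffOn.d2 {U : Set RR2} {f : RR2 → RR4} (hf : ContDiffOn ℝ (⊤ : ℕ∞) f U)
    (hU : IsOpen U) : ContDiffOn ℝ (⊤ : ℕ∞) (d2 f) U :=
  (hf.fderiv_of_isOpen hU le_rfl).clm_apply contDiffOn_const

theorem d1_d2_comm {f : RR2 → RR4} {x : RR2} (hf : ContDiffAt ℝ 2 f x) :
    d1 (d2 f) x = d2 (d1 f) x := by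
  have hfd : DifferentiableAt ℝ (fderiv ℝ f) x :=
    (hf.fderiv_right le_rfl).differentiableAt one_ne_zero
  have hcomp (v w : RR2) :
      fderiv ℝ (fun y => fderiv ℝ f y v) x w = fderiv ℝ (fderiv ℝ f) x w v := by
    rw [fderiv_clm_apply hfd (differentiableAt_const v)]
    simp
  calc d1 (d2 f) x = fderiv ℝ (fderiv ℝ f) x (1, 0) (0, 1) := hcomp _ _
    _ = fderiv ℝ (fderiv ℝ f) x (0, 1) (1, 0) := (hf.isSymmSndFDerivAt (by simp)).eq _ _
    _ = d2 (d1 f) x := (hcomp _ _).symm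

theorem d1_smul {a : RR2 → ℝ} {f : RR2 → RR4} {x : RR2} (ha : DifferentiableAt ℝ a x)
    (hf : DifferentiableAt ℝ f x) : d1 (fun y => a y • f y) x = d1s a x • f x + a x • d1 f x := by
  simp [d1, d1s, fderiv_fun_smul ha hf, add_comm]

theorem d2_smul {a : RR2 → ℝ} {f : RR2 → RR4} {x : RR2} (ha : DifferentiableAt ℝ a x)
    (hf : DifferentiableAt ℝ f x) : d2 (fun y => a y • f y) x = d2s a x • f x + a x • d2 f x := by
  simp [d2, d2s, fderiv_fun_smul ha hf, add_comm]

theorem weighted_divergence_eq {lam : RR2 → ℝ} {f : RR2 → RR4} {x : RR2}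
    (hlam : DifferentiableAt ℝ lam x) (hf1 : DifferentiableAt ℝ (d1 f) x)
    (hf2 : DifferentiableAt ℝ (d2 f) x) :
    d1 (fun y => (1 - exp (-(2 * lam y))) • d1 f y) x
        + d2 (fun y => (1 + exp (-(2 * lam y))) • d2 f y) x
      = (2 * d1s lam x * exp (-(2 * lam x))) • d1 f x + (1 - exp (-(2 * lam x))) • d1 (d1 f) x
        + ((-2 * d2s lam x * exp (-(2 * lam x))) • d2 f x
          + (1 + exp (-(2 * lam x))) • d2 (d2 f) x) := by
  have hdμ (v : RR2) : fderiv ℝ (fun y => exp (-(2 * lam y))) x v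
      = -2 * fderiv ℝ lam x v * exp (-(2 * lam x)) := by
    simpa only [neg_mul] using fderiv_exp_const_mul_apply hlam (-2) v
  have hd1 : d1s (fun y => 1 - exp (-(2 * lam y))) x = 2 * d1s lam x * exp (-(2 * lam x)) := by
    simp only [d1s, fderiv_const_sub, neg_apply, hdμ]
    ring
  have hd2 : d2s (fun y => 1 + exp (-(2 * lam y))) x = -2 * d2s lam x * exp (-(2 * lam x)) := by
    simp only [d2s, fderiv_const_add, hdμ]
  rw [d1_smul (by fun_prop) hf1, d2_smul (by fun_prop) hf2, hd1, hd2]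

theorem linearIndependent_of_det4_ne_zero {a b c d : RR4} (h : det4 a b c d ≠ 0) :
    LinearIndependent ℝ ![a, b, c, d] := by
  refine LinearIndependent.of_comp (WithLp.linearEquiv 2 ℝ (Fin 4 → ℝ)).toLinearMap ?_
  have hrows := Matrix.linearIndependent_rows_of_det_ne_zero h
  have e : (WithLp.linearEquiv 2 ℝ (Fin 4 → ℝ)).toLinearMap ∘ ![a, b, c, d]
      = fun i => Matrix.of ![fun j => a j, fun j => b j, fun j => c j, fun j => d j] i := by
    ext i : 1
    fin_cases i <;> rfl
  rw [e]
  exact hrows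

theorem eq_of_inner_eq_of_det4_ne_zero {a b c d v w : RR4} (h : det4 a b c d ≠ 0)
    (ha : ⟪a, v⟫ = ⟪a, w⟫) (hb : ⟪b, v⟫ = ⟪b, w⟫) (hc : ⟪c, v⟫ = ⟪c, w⟫)
    (hd : ⟪d, v⟫ = ⟪d, w⟫) : v = w := by
  refine InnerProductSpace.ext_inner_left_basis
    (basisOfLinearIndependentOfCardEqFinrank (linearIndependent_of_det4_ne_zero h) (by simp)) ?_
  intro i
  fin_cases i <;> simpa

namespace IsConformalImmersionS3

variable {U : Set RR2} {Φ n : RR2 → RR4} {lam : RR2 → ℝ} {x : RR2}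

theorem differentiableAt_Phi (h : IsConformalImmersionS3 U Φ lam n) (hU : IsOpen U)
    (hx : x ∈ U) : DifferentiableAt ℝ Φ x :=
  (h.smooth_Phi.differentiableOn (by simp)).differentiableAt (hU.mem_nhds hx)

theorem differentiableAt_d1 (h : IsConformalImmersionS3 U Φ lam n) (hU : IsOpen U)
    (hx : x ∈ U) : DifferentiableAt ℝ (d1 Φ) x :=
  ((h.smooth_Phi.d1 hU).differentiableOn (by simp)).differentiableAt (hU.mem_nhds hx)

theorem differentiableAt_d2 (h : IsConformalImmersionS3 U Φ lam n) (hU : IsOpen U)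
    (hx : x ∈ U) : DifferentiableAt ℝ (d2 Φ) x :=
  ((h.smooth_Phi.d2 hU).differentiableOn (by simp)).differentiableAt (hU.mem_nhds hx)

theorem differentiableAt_lam (h : IsConformalImmersionS3 U Φ lam n) (hU : IsOpen U)
    (hx : x ∈ U) : DifferentiableAt ℝ lam x :=
  (h.smooth_lam.differentiableOn (by simp)).differentiableAt (hU.mem_nhds hx)

theorem d1_d2_comm (h : IsConformalImmersionS3 U Φ lam n) (hU : IsOpen U) (hx : x ∈ U) :
    d1 (d2 Φ) x = d2 (d1 Φ) x :=
  _root_.d1_d2_comm <|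
    (h.smooth_Phi.contDiffAt (hU.mem_nhds hx)).of_le (WithTop.coe_le_coe.2 le_top)

theorem inner_d1_self (h : IsConformalImmersionS3 U Φ lam n) (hx : x ∈ U) :
    ⟪d1 Φ x, d1 Φ x⟫ = exp (2 * lam x) := by
  rw [real_inner_self_eq_norm_sq, h.conf_norm1 x hx, ← exp_nat_mul]
  norm_num

theorem inner_d2_self (h : IsConformalImmersionS3 U Φ lam n) (hx : x ∈ U) :
    ⟪d2 Φ x, d2 Φ x⟫ = exp (2 * lam x) := by
  rw [real_inner_self_eq_norm_sq, h.conf_norm2 x hx, ← exp_nat_mul]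
  norm_num

theorem inner_Phi_fderiv (h : IsConformalImmersionS3 U Φ lam n) (hU : IsOpen U) (hx : x ∈ U)
    (v : RR2) : ⟪Φ x, fderiv ℝ Φ x v⟫ = 0 := by
  have hΦ := h.differentiableAt_Phi hU hx
  have hsphere : (fun y => ⟪Φ y, Φ y⟫) =ᶠ[𝓝 x] fun _ => 1 :=
    eventuallyEq_of_mem (hU.mem_nhds hx) fun y hy => by simp [h.mem_sphere y hy]
  have := inner_fderiv_add_inner_fderiv_of_eventuallyEq hΦ hΦ hsphere v
  rw [real_inner_comm, fderiv_const_apply] at this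
  simpa using this

theorem inner_Phi_d1_d1 (h : IsConformalImmersionS3 U Φ lam n) (hU : IsOpen U) (hx : x ∈ U) :
    ⟪Φ x, d1 (d1 Φ) x⟫ = -exp (2 * lam x) := by
  have hΦ1 : (fun y => ⟪Φ y, d1 Φ y⟫) =ᶠ[𝓝 x] fun _ => 0 :=
    eventuallyEq_of_mem (hU.mem_nhds hx) fun y hy => h.inner_Phi_fderiv hU hy _
  have := inner_fderiv_add_inner_fderiv_of_eventuallyEq (h.differentiableAt_Phi hU hx)
    (h.differentiableAt_d1 hU hx) hΦ1 (1, 0)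
  rw [fderiv_const_apply] at this
  change ⟪d1 Φ x, d1 Φ x⟫ + ⟪Φ x, d1 (d1 Φ) x⟫ = 0 at this
  linarith [h.inner_d1_self hx]

theorem inner_Phi_d2_d2 (h : IsConformalImmersionS3 U Φ lam n) (hU : IsOpen U) (hx : x ∈ U) :
    ⟪Φ x, d2 (d2 Φ) x⟫ = -exp (2 * lam x) := by
  have hΦ2 : (fun y => ⟪Φ y, d2 Φ y⟫) =ᶠ[𝓝 x] fun _ => 0 :=
    eventuallyEq_of_mem (hU.mem_nhds hx) fun y hy => h.inner_Phi_fderiv hU hy _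
  have := inner_fderiv_add_inner_fderiv_of_eventuallyEq (h.differentiableAt_Phi hU hx)
    (h.differentiableAt_d2 hU hx) hΦ2 (0, 1)
  rw [fderiv_const_apply] at this
  change ⟪d2 Φ x, d2 Φ x⟫ + ⟪Φ x, d2 (d2 Φ) x⟫ = 0 at this
  linarith [h.inner_d2_self hx]

theorem inner_d1_fderiv_d1 (h : IsConformalImmersionS3 U Φ lam n) (hU : IsOpen U) (hx : x ∈ U)
    (v : RR2) : ⟪d1 Φ x, fderiv ℝ (d1 Φ) x v⟫ = fderiv ℝ lam x v * exp (2 * lam x) := by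
  have hΦ1 := h.differentiableAt_d1 hU hx
  have hnorm : (fun y => ⟪d1 Φ y, d1 Φ y⟫) =ᶠ[𝓝 x] fun y => exp (2 * lam y) :=
    eventuallyEq_of_mem (hU.mem_nhds hx) fun y hy => h.inner_d1_self hy
  have := inner_fderiv_add_inner_fderiv_of_eventuallyEq hΦ1 hΦ1 hnorm v
  rw [real_inner_comm, fderiv_exp_const_mul_apply (h.differentiableAt_lam hU hx)] at this
  linarith

theorem inner_d2_fderiv_d2 (h : IsConformalImmersionS3 U Φ lam n) (hU : IsOpen U) (hx : x ∈ U)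
    (v : RR2) : ⟪d2 Φ x, fderiv ℝ (d2 Φ) x v⟫ = fderiv ℝ lam x v * exp (2 * lam x) := by
  have hΦ2 := h.differentiableAt_d2 hU hx
  have hnorm : (fun y => ⟪d2 Φ y, d2 Φ y⟫) =ᶠ[𝓝 x] fun y => exp (2 * lam y) :=
    eventuallyEq_of_mem (hU.mem_nhds hx) fun y hy => h.inner_d2_self hy
  have := inner_fderiv_add_inner_fderiv_of_eventuallyEq hΦ2 hΦ2 hnorm v
  rw [real_inner_comm, fderiv_exp_const_mul_apply (h.differentiableAt_lam hU hx)] at this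
  linarith

theorem inner_fderiv_d1_add_inner_fderiv_d2_eq_zero (h : IsConformalImmersionS3 U Φ lam n)
    (hU : IsOpen U) (hx : x ∈ U) (v : RR2) :
    ⟪fderiv ℝ (d1 Φ) x v, d2 Φ x⟫ + ⟪d1 Φ x, fderiv ℝ (d2 Φ) x v⟫ = 0 := by
  have horth : (fun y => ⟪d1 Φ y, d2 Φ y⟫) =ᶠ[𝓝 x] fun _ => 0 :=
    eventuallyEq_of_mem (hU.mem_nhds hx) h.conf_orth
  rw [inner_fderiv_add_inner_fderiv_of_eventuallyEq (h.differentiableAt_d1 hU hx)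
    (h.differentiableAt_d2 hU hx) horth v, fderiv_const_apply, zero_apply]

theorem inner_d1_d2_d2 (h : IsConformalImmersionS3 U Φ lam n) (hU : IsOpen U) (hx : x ∈ U) :
    ⟪d1 Φ x, d2 (d2 Φ) x⟫ = -(d1s lam x * exp (2 * lam x)) := by
  have horth := h.inner_fderiv_d1_add_inner_fderiv_d2_eq_zero hU hx (0, 1)
  change ⟪d2 (d1 Φ) x, d2 Φ x⟫ + ⟪d1 Φ x, d2 (d2 Φ) x⟫ = 0 at horth
  have hmixed : ⟪d2 (d1 Φ) x, d2 Φ x⟫ = d1s lam x * exp (2 * lam x) := by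
    rw [← h.d1_d2_comm hU hx, real_inner_comm]
    exact h.inner_d2_fderiv_d2 hU hx (1, 0)
  linarith

theorem inner_d2_d1_d1 (h : IsConformalImmersionS3 U Φ lam n) (hU : IsOpen U) (hx : x ∈ U) :
    ⟪d2 Φ x, d1 (d1 Φ) x⟫ = -(d2s lam x * exp (2 * lam x)) := by
  have horth := h.inner_fderiv_d1_add_inner_fderiv_d2_eq_zero hU hx (1, 0)
  change ⟪d1 (d1 Φ) x, d2 Φ x⟫ + ⟪d1 Φ x, d1 (d2 Φ) x⟫ = 0 at horth
  have hmixed : ⟪d1 Φ x, d1 (d2 Φ) x⟫ = d2s lam x * exp (2 * lam x) := by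
    rw [h.d1_d2_comm hU hx]
    exact h.inner_d1_fderiv_d1 hU hx (0, 1)
  rw [real_inner_comm]
  linarith

theorem eq_of_inner_frame_eq (h : IsConformalImmersionS3 U Φ lam n) (hx : x ∈ U) {v w : RR4}
    (hΦ : ⟪Φ x, v⟫ = ⟪Φ x, w⟫) (h1 : ⟪d1 Φ x, v⟫ = ⟪d1 Φ x, w⟫)
    (h2 : ⟪d2 Φ x, v⟫ = ⟪d2 Φ x, w⟫) (hn : ⟪n x, v⟫ = ⟪n x, w⟫) : v = w :=
  eq_of_inner_eq_of_det4_ne_zero (h.oriented x hx).ne' hΦ h1 h2 hn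

theorem divergence_form_eq_smul_normal (h : IsConformalImmersionS3 U Φ lam n) (hU : IsOpen U)
    (hx : x ∈ U) :
    d1 (fun y => (1 - exp (-(2 * lam y))) • d1 Φ y) x
        + d2 (fun y => (1 + exp (-(2 * lam y))) • d2 Φ y) x
        + (2 * exp (2 * lam x)) • Φ x
      = (2 * exp (2 * lam x) * (meanCurv Φ lam n x - exp (-(4 * lam x)) * I011 Φ n x)) • n x := by
  rw [weighted_divergence_eq (h.differentiableAt_lam hU hx) (h.differentiableAt_d1 hU hx)
    (h.differentiableAt_d2 hU hx)]
  have hΦ1 : ⟪Φ x, d1 Φ x⟫ = 0 := h.inner_Phi_fderiv hU hx _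
  have hΦ2 : ⟪Φ x, d2 Φ x⟫ = 0 := h.inner_Phi_fderiv hU hx _
  have h111 : ⟪d1 Φ x, d1 (d1 Φ) x⟫ = d1s lam x * exp (2 * lam x) :=
    h.inner_d1_fderiv_d1 hU hx _
  have h222 : ⟪d2 Φ x, d2 (d2 Φ) x⟫ = d2s lam x * exp (2 * lam x) :=
    h.inner_d2_fderiv_d2 hU hx _
  have hΦΦ : ⟪Φ x, Φ x⟫ = 1 := by simp [h.mem_sphere x hx]
  have hnn : ⟪n x, n x⟫ = 1 := by simp [h.n_norm x hx]
  have hexp : exp (2 * lam x) * exp (-(2 * lam x)) = 1 := by rw [← exp_add]; simp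
  have hexp4 : exp (-(4 * lam x)) = exp (-(2 * lam x)) ^ 2 := by rw [← exp_nat_mul]; ring_nf
  apply h.eq_of_inner_frame_eq hx
  · simp only [inner_add_right, real_inner_smul_right, hΦ1, hΦ2, hΦΦ, h.inner_Phi_d1_d1 hU hx,
      h.inner_Phi_d2_d2 hU hx, real_inner_comm (n x), h.n_orth_Phi x hx]
    ring
  · simp only [inner_add_right, real_inner_smul_right, h.inner_d1_self hx, h.conf_orth x hx,
      h111, h.inner_d1_d2_d2 hU hx, real_inner_comm (Φ x), hΦ1, real_inner_comm (n x),
      h.n_orth_d1 x hx]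
    ring
  · simp only [inner_add_right, real_inner_smul_right, h.inner_d2_self hx,
      real_inner_comm (d1 Φ x), h.conf_orth x hx, h.inner_d2_d1_d1 hU hx, h222,
      real_inner_comm (Φ x), hΦ2, real_inner_comm (n x), h.n_orth_d2 x hx]
    ring
  · simp only [inner_add_right, real_inner_smul_right, h.n_orth_d1 x hx, h.n_orth_d2 x hx,
      h.n_orth_Phi x hx, hnn, meanCurv, I011, I11, I22, hexp4]
    linear_combination (exp (-(2 * lam x)) * (⟪n x, d1 (d1 Φ) x⟫ - ⟪n x, d2 (d2 Φ) x⟫)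
      - (⟪n x, d1 (d1 Φ) x⟫ + ⟪n x, d2 (d2 Φ) x⟫)) * hexp

end IsConformalImmersionS3

/-- If a smooth conformal immersion `Φ : U → S³` satisfies
`H = e^{-4λ} I⁰₁₁` on `U`, then it solves the `ℝ⁴`-valued divergence-form equation
`∂_{x₁}((1 - e^{-2λ})∂_{x₁}Φ) + ∂_{x₂}((1 + e^{-2λ})∂_{x₂}Φ) + 2 e^{2λ} Φ = 0` on `U`. -/
theorem constrained_minimal_divergence_form
    (U : Set RR2) (hU : IsOpen U)
    (Φ : RR2 → RR4) (lam : RR2 → ℝ) (n : RR2 → RR4)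
    (h : IsConformalImmersionS3 U Φ lam n)
    (hccms : ∀ x ∈ U, meanCurv Φ lam n x = exp (-(4 * lam x)) * I011 Φ n x) :
    ∀ x ∈ U,
      d1 (fun y => (1 - exp (-(2 * lam y))) • d1 Φ y) x
        + d2 (fun y => (1 + exp (-(2 * lam y))) • d2 Φ y) x
        + (2 * exp (2 * lam x)) • Φ x = 0 := by
  intro x hx
  rw [h.divergence_form_eq_smul_normal hU hx, hccms x hx, sub_self, mul_zero, zero_smul]
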